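/- arXiv:2205.05905 — 2 statements merged into one kernel-verified Lean document; each statement's English description precedes it below -/
import Mathlib

section
/- For every natural number m, ∑_{k=0}^{m} (-2)^k · binom(m,k) · H_k / (k+1) equals -(2/(m+1)) · O_{(m+1)/2} if m is odd, and equals 0 if m is even. -/
/-!
Write `binomSum x f n = ∑ₖ xᵏ (n choose k) f k`. Pascal's rule gives
`binomSum x f (n + 1) = binomSum x f n + x * binomSum x (f ∘ succ) n`, and the absorption identity
`(k + 1) (n + 1 choose k + 1) = (n + 1) (n choose k)` turns the sum of the theorem into
`T (m + 1) / (-2 (m + 1))`, where `T = binomSum (-2) (k ↦ H (k - 1))`.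
At `x = -2` we have `1 + x = -1`, so Pascal's rule yields `T (n + 1) = T n - 2 A n` and
`A (n + 1) = -A n - 2 C n` for `A = binomSum (-2) H` and `C = binomSum (-2) (k ↦ 1 / (k + 1))`,
while absorption and the binomial theorem give `C n = (1 - (-1)ⁿ⁺¹) / (2 (n + 1))`.
Solving along even and odd indices: `A (2r) = 2 O r`, `A (2r + 1) = -2 O (r + 1)`,
`T (2r) = 4 O r` and `T (2r + 1) = 0`.
-/

/-- The `n`-th harmonic number `H_n = 1 + 1/2 + ⋯ + 1/n` (with `H_0 = 0`). -/
noncomputable def H (n : ℕ) : ℝ := ∑ i ∈ Finset.range n, 1 / ((i : ℝ) + 1)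

/-- The `r`-th odd harmonic number `O_r = 1 + 1/3 + ⋯ + 1/(2r-1)`. -/
noncomputable def O (r : ℕ) : ℝ := ∑ i ∈ Finset.range r, 1 / (2 * (i : ℝ) + 1)

open Finset

section BinomSum

variable {R : Type*}

def binomSum [CommSemiring R] (x : R) (f : ℕ → R) (n : ℕ) : R :=
  ∑ k ∈ range (n + 1), x ^ k * n.choose k * f k

theorem binomSum_const_one [CommSemiring R] (x : R) (n : ℕ) :
    binomSum x (fun _ => 1) n = (1 + x) ^ n := by
  simp [binomSum, add_comm 1 x, add_pow]

theorem binomSum_add [CommSemiring R] (x : R) (f g : ℕ → R) (n : ℕ) :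
    binomSum x (fun k => f k + g k) n = binomSum x f n + binomSum x g n := by
  simp only [binomSum, mul_add, sum_add_distrib]

theorem binomSum_succ [CommSemiring R] (x : R) (f : ℕ → R) (n : ℕ) :
    binomSum x f (n + 1) = binomSum x f n + x * binomSum x (fun k => f (k + 1)) n := by
  have hshift : binomSum x f n
      = ∑ k ∈ range (n + 1), x ^ (k + 1) * n.choose (k + 1) * f (k + 1) + f 0 := by
    have h := sum_range_succ' (fun k => x ^ k * n.choose k * f k) (n + 1)
    rw [sum_range_succ, Nat.choose_succ_self] at h
    simpa [binomSum] using h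
  rw [hshift, binomSum, binomSum, sum_range_succ', mul_sum, add_right_comm, ← sum_add_distrib]
  congr 1
  · refine sum_congr rfl fun k _ => ?_
    rw [Nat.choose_succ_succ', Nat.cast_add, pow_succ]
    ring
  · simp

theorem binomSum_succ_eq_absorb [Field R] [CharZero R] (x : R) (f : ℕ → R) (n : ℕ) :
    binomSum x f (n + 1) = f 0 + (n + 1) * x * binomSum x (fun k => f (k + 1) / (k + 1)) n := by
  rw [binomSum, sum_range_succ', binomSum, mul_sum, add_comm]
  congr 1
  · simp
  refine sum_congr rfl fun k _ => ?_
  have hk : (k + 1 : R) ≠ 0 := Nat.cast_add_one_ne_zero k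
  have hchoose : ((n + 1).choose (k + 1) : R) * (k + 1) = (n + 1) * n.choose k := by
    exact_mod_cast (Nat.add_one_mul_choose_eq n k).symm
  field_simp
  linear_combination x ^ (k + 1) * f (k + 1) * hchoose

theorem binomSum_one_div_succ [Field R] [CharZero R] (x : R) (n : ℕ) :
    (n + 1) * x * binomSum x (fun k => 1 / (k + 1)) n = (1 + x) ^ (n + 1) - 1 := by
  rw [← binomSum_const_one, binomSum_succ_eq_absorb]
  ring

end BinomSum

lemma H_zero : H 0 = 0 := by simp [H]

lemma H_succ (n : ℕ) : H (n + 1) = H n + 1 / (n + 1) := by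
  simp [H, sum_range_succ]

lemma O_succ (r : ℕ) : O (r + 1) = O r + 1 / (2 * r + 1) := by
  simp [O, sum_range_succ]

theorem binomSum_H_succ (x : ℝ) (n : ℕ) :
    binomSum x H (n + 1) = (1 + x) * binomSum x H n + x * binomSum x (fun k => 1 / (k + 1)) n := by
  simp only [binomSum_succ, H_succ, binomSum_add]
  ring

theorem binomSum_H_pred_succ (x : ℝ) (n : ℕ) :
    binomSum x (fun k => H (k - 1)) (n + 1)
      = binomSum x (fun k => H (k - 1)) n + x * binomSum x H n := by
  simp only [binomSum_succ, Nat.add_sub_cancel]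

lemma binomSum_neg_two_one_div_succ_two_mul (r : ℕ) :
    binomSum (-2 : ℝ) (fun k => 1 / (k + 1)) (2 * r) = 1 / (2 * r + 1) := by
  have h := binomSum_one_div_succ (-2 : ℝ) (2 * r)
  norm_num [pow_succ, pow_mul] at h
  simp only [one_div] at h ⊢
  exact eq_inv_of_mul_eq_one_right (by linarith)

lemma binomSum_neg_two_one_div_succ_two_mul_add_one (r : ℕ) :
    binomSum (-2 : ℝ) (fun k => 1 / (k + 1)) (2 * r + 1) = 0 := by
  have h := binomSum_one_div_succ (-2 : ℝ) (2 * r + 1)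
  norm_num [pow_succ, pow_mul] at h
  simpa only [one_div] using h.resolve_left (by positivity)

lemma binomSum_neg_two_H_succ (n : ℕ) :
    binomSum (-2 : ℝ) H (n + 1)
      = -binomSum (-2) H n - 2 * binomSum (-2 : ℝ) (fun k => 1 / (k + 1)) n := by
  rw [binomSum_H_succ]
  ring

lemma binomSum_neg_two_H_two_mul (r : ℕ) : binomSum (-2 : ℝ) H (2 * r) = 2 * O r := by
  induction r with
  | zero => simp [binomSum, H_zero, O]
  | succ r ih =>
    rw [show 2 * (r + 1) = 2 * r + 1 + 1 by ring, binomSum_neg_two_H_succ,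
      binomSum_neg_two_H_succ, ih, binomSum_neg_two_one_div_succ_two_mul,
      binomSum_neg_two_one_div_succ_two_mul_add_one, O_succ]
    ring

lemma binomSum_neg_two_H_two_mul_add_one (r : ℕ) :
    binomSum (-2 : ℝ) H (2 * r + 1) = -2 * O (r + 1) := by
  rw [binomSum_neg_two_H_succ, binomSum_neg_two_H_two_mul, binomSum_neg_two_one_div_succ_two_mul,
    O_succ]
  ring

lemma binomSum_neg_two_H_pred_two_mul (r : ℕ) :
    binomSum (-2 : ℝ) (fun k => H (k - 1)) (2 * r) = 4 * O r := by
  induction r with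
  | zero => simp [binomSum, H_zero, O]
  | succ r ih =>
    rw [show 2 * (r + 1) = 2 * r + 1 + 1 by ring, binomSum_H_pred_succ, binomSum_H_pred_succ, ih,
      binomSum_neg_two_H_two_mul, binomSum_neg_two_H_two_mul_add_one]
    ring

lemma binomSum_neg_two_H_pred_two_mul_add_one (r : ℕ) :
    binomSum (-2 : ℝ) (fun k => H (k - 1)) (2 * r + 1) = 0 := by
  rw [binomSum_H_pred_succ, binomSum_neg_two_H_pred_two_mul, binomSum_neg_two_H_two_mul]
  ring

/-- The main Corollary of the paper. -/
theorem stmt_3 (m : ℕ) :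
    ∑ k ∈ Finset.range (m + 1), (-2 : ℝ) ^ k * (m.choose k : ℝ) * H k / ((k : ℝ) + 1)
    = if Odd m then -(2 / ((m : ℝ) + 1)) * O ((m + 1) / 2) else 0 := by
  have habsorb := binomSum_succ_eq_absorb (-2 : ℝ) (fun k => H (k - 1)) m
  -- the `k = 0` term is `H (0 - 1) = H 0 = 0` under truncated subtraction
  simp only [Nat.add_sub_cancel, zero_tsub, H_zero, zero_add] at habsorb
  have hm : (m + 1 : ℝ) ≠ 0 := Nat.cast_add_one_ne_zero m
  rw [show ∑ k ∈ range (m + 1), (-2 : ℝ) ^ k * (m.choose k : ℝ) * H k / ((k : ℝ) + 1)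
      = binomSum (-2) (fun k => H k / (k + 1)) m by simp only [binomSum, mul_div_assoc]]
  rcases Nat.even_or_odd' m with ⟨r, rfl | rfl⟩
  · rw [binomSum_neg_two_H_pred_two_mul_add_one] at habsorb
    rw [if_neg (Nat.not_odd_iff_even.mpr (even_two_mul r))]
    exact (mul_eq_zero.mp habsorb.symm).resolve_left (mul_ne_zero hm (by norm_num))
  · rw [show 2 * r + 1 + 1 = 2 * (r + 1) by ring, binomSum_neg_two_H_pred_two_mul] at habsorb
    rw [if_pos (odd_two_mul_add_one r), show (2 * r + 1 + 1) / 2 = r + 1 by omega]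
    field_simp
    linear_combination habsorb / 2
end

section
/- Let n be a natural number and let ℓ be a complex number such that k + 2ℓ + 1 ≠ 0 for every integer k with 0 ≤ k ≤ n. Then ∑_{k=0}^{n} (-1/2)^k · C(n+ℓ, n-k) · C(2k+2ℓ, k) · k(n-k)/(k+2ℓ+1) equals -2^{-n} · n · C(n+ℓ, n/2) if n is even, and equals 0 if n is odd. -/
/-!
Write `F(n, k) = (-1/2)^k C(n+ℓ, n-k) C(2k+2ℓ, k)`. Everything follows from the term ratio
`(k+1)(k+2ℓ+1) F(n, k+1) = -(n-k)(2k+2ℓ+1) F(n, k)` for `k < n`.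
Dividing it by `k+2ℓ+1` turns the summand of the theorem into
`k F(n,k) - (k+1) F(n,k+1) - n F(n,k)`, so the sum telescopes to `-n ∑ₖ F(n,k)`.
It likewise makes `(n(n+2ℓ) - (n-k)(n-k-1)) F(n,k)` telescope with potential `k(k+2ℓ) F(n,k)`;
comparing `(n-k)(n-k-1) F(n,k)` with `F(n-2,k)` turns this into a two-step recurrence for
`∑ₖ F(n,k)`, whose solution is the Reed Dawson-like closed form (Proposition 1 of the paper).
-/

/-- Generalized binomial coefficient `C(z, m) = (∏_{j=0}^{m-1} (z - j)) / m!` for complex `z`. -/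
noncomputable def cbinom (z : ℂ) (m : ℕ) : ℂ :=
  (∏ j ∈ Finset.range m, (z - j)) / (Nat.factorial m)

open Finset

lemma cbinom_zero (z : ℂ) : cbinom z 0 = 1 := by simp [cbinom]

lemma cbinom_one (z : ℂ) : cbinom z 1 = z := by simp [cbinom]

lemma cbinom_succ_mul (z : ℂ) (m : ℕ) :
    cbinom z (m + 1) * (m + 1) = cbinom z m * (z - m) := by
  have hm : ((m : ℂ) + 1) ≠ 0 := by exact_mod_cast m.succ_ne_zero
  simp only [cbinom, prod_range_succ, Nat.factorial_succ, Nat.cast_mul, Nat.cast_succ]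
  field_simp

lemma cbinom_add_one_succ_mul (z : ℂ) (m : ℕ) :
    cbinom (z + 1) (m + 1) * (m + 1) = (z + 1) * cbinom z m := by
  have hm : ((m : ℂ) + 1) ≠ 0 := by exact_mod_cast m.succ_ne_zero
  have hprod : ∏ j ∈ range (m + 1), (z + 1 - j) = (z + 1) * ∏ j ∈ range m, (z - j) := by
    rw [prod_range_succ']
    push_cast
    ring_nf
  simp only [cbinom, hprod, Nat.factorial_succ, Nat.cast_mul, Nat.cast_succ]
  field_simp

lemma cbinom_add_two_add_two_mul (z : ℂ) (m : ℕ) :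
    cbinom (z + 2) (m + 2) * ((m + 2) * (m + 1)) = (z + 2) * (z + 1) * cbinom z m := by
  have h₂ := cbinom_add_one_succ_mul (z + 1) (m + 1)
  have h₁ := cbinom_add_one_succ_mul z m
  push_cast at h₂
  rw [show z + 1 + 1 = z + 2 by ring] at h₂
  linear_combination ((m : ℂ) + 1) * h₂ + (z + 2) * h₁

lemma cbinom_add_two_succ_mul (z : ℂ) (m : ℕ) :
    cbinom (z + 2) (m + 1) * ((m + 1) * (z + 1 - m)) = (z + 2) * (z + 1) * cbinom z m := by
  have h₂ := cbinom_add_one_succ_mul (z + 1) m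
  have h₁ := cbinom_succ_mul (z + 1) m
  have h₀ := cbinom_add_one_succ_mul z m
  rw [show z + 1 + 1 = z + 2 by ring] at h₂
  linear_combination (z + 1 - m) * h₂ - (z + 2) * h₁ + (z + 2) * h₀

noncomputable def reedDawsonTerm (ℓ : ℂ) (n k : ℕ) : ℂ :=
  (-(1/2) : ℂ) ^ k * cbinom ((n : ℂ) + ℓ) (n - k) * cbinom (2 * (k : ℂ) + 2 * ℓ) k

noncomputable def reedDawsonSum (ℓ : ℂ) (n : ℕ) : ℂ :=
  ∑ k ∈ range (n + 1), reedDawsonTerm ℓ n k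

lemma reedDawsonTerm_succ_mul (ℓ : ℂ) {n k : ℕ} (hk : k < n) :
    ((k : ℂ) + 1) * (k + 2 * ℓ + 1) * reedDawsonTerm ℓ n (k + 1)
      = -(((n : ℂ) - k) * (2 * k + 2 * ℓ + 1)) * reedDawsonTerm ℓ n k := by
  obtain ⟨m, rfl⟩ := Nat.exists_eq_add_of_lt hk
  have hA := cbinom_succ_mul ((↑(k + m + 1) : ℂ) + ℓ) m
  have hB := cbinom_add_two_succ_mul (2 * k + 2 * ℓ) k
  simp only [reedDawsonTerm, show k + m + 1 - (k + 1) = m by omega,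
    show k + m + 1 - k = m + 1 by omega]
  push_cast at hA ⊢
  rw [show 2 * ((k : ℂ) + 1) + 2 * ℓ = 2 * k + 2 * ℓ + 2 by ring]
  linear_combination (-(1/2) : ℂ) ^ k * (-(1/2) * cbinom (k + m + 1 + ℓ) m * hB
    + (2 * k + 2 * ℓ + 1) * cbinom (2 * k + 2 * ℓ) k * hA)

lemma reedDawsonTerm_add_two_mul (ℓ : ℂ) {n k : ℕ} (hk : k ≤ n) :
    ((n : ℂ) + 2 - k) * (n + 1 - k) * reedDawsonTerm ℓ (n + 2) k
      = ((n : ℂ) + 2 + ℓ) * (n + 1 + ℓ) * reedDawsonTerm ℓ n k := by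
  obtain ⟨m, rfl⟩ := Nat.exists_eq_add_of_le hk
  have h := cbinom_add_two_add_two_mul ((k : ℂ) + m + ℓ) m
  simp only [reedDawsonTerm, show k + m + 2 - k = m + 2 by omega, show k + m - k = m by omega]
  push_cast
  rw [show (k : ℂ) + m + 2 + ℓ = k + m + ℓ + 2 by ring]
  linear_combination (-(1/2) : ℂ) ^ k * cbinom (2 * k + 2 * ℓ) k * h

lemma sum_reedDawsonTerm_mul_eq_zero (ℓ : ℂ) (n : ℕ) :
    ∑ k ∈ range (n + 1), ((n : ℂ) * (n + 2 * ℓ) - (n - k) * (n - k - 1)) * reedDawsonTerm ℓ n k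
      = 0 := by
  set V : ℕ → ℂ := fun k ↦ k * (k + 2 * ℓ) * reedDawsonTerm ℓ n k with hV
  have hstep : ∀ k ∈ range n,
      ((n : ℂ) * (n + 2 * ℓ) - (n - k) * (n - k - 1)) * reedDawsonTerm ℓ n k = V k - V (k + 1) := by
    intro k hk
    have h := reedDawsonTerm_succ_mul ℓ (mem_range.1 hk)
    simp only [hV]
    push_cast
    linear_combination h
  rw [sum_range_succ, sum_congr rfl hstep, sum_range_sub']
  simp only [hV]
  push_cast
  ring

lemma reedDawsonSum_add_two (ℓ : ℂ) (n : ℕ) :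
    ((n : ℂ) + 2) * (n + 2 + 2 * ℓ) * reedDawsonSum ℓ (n + 2)
      = ((n : ℂ) + 2 + ℓ) * (n + 1 + ℓ) * reedDawsonSum ℓ n := by
  have htail : ∑ k ∈ range (n + 2 + 1),
      (((n + 2 : ℕ) : ℂ) - k) * (((n + 2 : ℕ) : ℂ) - k - 1) * reedDawsonTerm ℓ (n + 2) k
        = ((n : ℂ) + 2 + ℓ) * (n + 1 + ℓ) * reedDawsonSum ℓ n := by
    rw [sum_range_succ, sum_range_succ, reedDawsonSum, mul_sum]
    push_cast
    rw [sub_self, zero_mul, zero_mul, add_zero, show (n : ℂ) + 2 - (n + 1) - 1 = 0 by ring,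
      mul_zero, zero_mul, add_zero]
    refine sum_congr rfl fun k hk ↦ ?_
    have h := reedDawsonTerm_add_two_mul ℓ (Nat.lt_succ_iff.1 (mem_range.1 hk))
    linear_combination h
  rw [← htail, reedDawsonSum, mul_sum, ← sub_eq_zero, ← sum_sub_distrib,
    ← sum_reedDawsonTerm_mul_eq_zero ℓ (n + 2)]
  refine sum_congr rfl fun k _ ↦ ?_
  push_cast
  ring

theorem reedDawsonSum_eq (ℓ : ℂ) {n : ℕ} (hℓ : ∀ k : ℕ, k ≤ n → (k : ℂ) + 2 * ℓ + 1 ≠ 0) :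
    reedDawsonSum ℓ n = if Even n then (2 : ℂ)⁻¹ ^ n * cbinom (n + ℓ) (n / 2) else 0 := by
  induction n using Nat.twoStepInduction with
  | zero => simp [reedDawsonSum, reedDawsonTerm, cbinom_zero]
  | one =>
    simp [reedDawsonSum, sum_range_succ, reedDawsonTerm, cbinom_zero, cbinom_one]
    ring
  | more m ih _ =>
    have hne : ((m : ℂ) + 2) * (m + 2 + 2 * ℓ) ≠ 0 := by
      refine mul_ne_zero (by exact_mod_cast (m + 1).succ_ne_zero) ?_
      have h := hℓ (m + 1) (by omega)
      push_cast at h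
      exact fun h' ↦ h (by linear_combination h')
    apply mul_left_cancel₀ hne
    rw [reedDawsonSum_add_two, ih fun k hk ↦ hℓ k (by omega)]
    rcases Nat.even_or_odd m with ⟨t, rfl⟩ | hm
    · rw [if_pos ⟨t, rfl⟩, if_pos ⟨t + 1, by ring⟩, show (t + t + 2) / 2 = t + 1 by omega,
        show (t + t) / 2 = t by omega]
      have h := cbinom_add_two_succ_mul ((t : ℂ) + t + ℓ) t
      push_cast
      rw [show (t : ℂ) + t + 2 + ℓ = t + t + ℓ + 2 by ring]
      linear_combination -(2 : ℂ)⁻¹ ^ (t + t) * h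
    · rw [if_neg (Nat.not_even_iff_odd.2 hm), if_neg (Nat.not_even_iff_odd.2 (hm.add_even even_two)),
        mul_zero, mul_zero]

lemma sum_reedDawsonTerm_mul_div (ℓ : ℂ) {n : ℕ} (hℓ : ∀ k : ℕ, k < n → (k : ℂ) + 2 * ℓ + 1 ≠ 0) :
    ∑ k ∈ range (n + 1),
      reedDawsonTerm ℓ n k * ((k : ℂ) * ((n - k : ℕ) : ℂ)) / ((k : ℂ) + 2 * ℓ + 1)
      = -(n * reedDawsonSum ℓ n) := by
  set U : ℕ → ℂ := fun k ↦ k * reedDawsonTerm ℓ n k with hU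
  have hstep : ∀ k ∈ range n,
      reedDawsonTerm ℓ n k * ((k : ℂ) * ((n - k : ℕ) : ℂ)) / ((k : ℂ) + 2 * ℓ + 1)
        = (U k - U (k + 1)) - n * reedDawsonTerm ℓ n k := by
    intro k hk
    have hkn := mem_range.1 hk
    have h := reedDawsonTerm_succ_mul ℓ hkn
    rw [div_eq_iff (hℓ k hkn), Nat.cast_sub hkn.le]
    simp only [hU]
    push_cast
    linear_combination h
  rw [sum_range_succ, Nat.sub_self, Nat.cast_zero, mul_zero, mul_zero, zero_div, add_zero,
    sum_congr rfl hstep, sum_sub_distrib, sum_range_sub', ← mul_sum, reedDawsonSum,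
    sum_range_succ]
  simp only [hU]
  push_cast
  ring

/-- A Reed Dawson-like identity derived in Section 5 of the paper via the modified
Abel lemma on summation by parts. -/
theorem stmt_13 (n : ℕ) (ℓ : ℂ) (hℓ : ∀ k : ℕ, k ≤ n → (k : ℂ) + 2 * ℓ + 1 ≠ 0) :
    ∑ k ∈ Finset.range (n + 1),
      (-(1/2) : ℂ) ^ k * cbinom ((n : ℂ) + ℓ) (n - k) * cbinom (2 * (k : ℂ) + 2 * ℓ) k
        * ((k : ℂ) * ((n - k : ℕ) : ℂ)) / ((k : ℂ) + 2 * ℓ + 1)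
    = if Even n then -((2 : ℂ)⁻¹ ^ n) * (n : ℂ) * cbinom ((n : ℂ) + ℓ) (n / 2) else 0 := by
  refine (sum_reedDawsonTerm_mul_div ℓ fun k hk ↦ hℓ k hk.le).trans ?_
  rw [reedDawsonSum_eq ℓ hℓ]
  split_ifs <;> ring
end
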